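/- Assume d^* < ∞ and lim_{k→∞} |β_k|^{−1} / min{d_k, d_{k+1}} = 0. Then for every ε > 0 there exists N ∈ ℕ such that every piecewise H¹ function f with Σ_k ∫_{Δ_k}(|f'(x)|² + |f(x)|²) dx ≤ 1 satisfies Σ_{k ≥ N} |f(x_k+) − f(x_k−)|² / |β_k| ≤ ε. (This uniform tail estimate is the core of the compactness of the jump map i_{X,β} : W^{1,2}(ℝ₊∖X; q) → ℓ²(ℕ; |β|^{−1}) in Lemma 4.1.) -/

import Mathlib

open MeasureTheory Set Filter

noncomputable section

/-- A function that is *piecewise `H¹`* with respect to the partition points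
`x 0 < x 1 < x 2 < ⋯` of `[0,∞)`: on each interval `Δ_{k+1} = [x k, x (k+1)]` it is
absolutely continuous with derivative `f' ∈ L²`, encoded via the fundamental
theorem of calculus; `fr k = f(x k +)` and `fl (k+1) = f(x (k+1) −)` are the
one-sided limits at the nodes. -/
structure PW1 (x : ℕ → ℝ) where
  f : ℝ → ℝ
  f' : ℝ → ℝ
  fr : ℕ → ℝ
  fl : ℕ → ℝ
  int_d : ∀ k, IntegrableOn f' (Icc (x k) (x (k + 1))) volume
  sq_d : ∀ k, IntegrableOn (fun t => f' t ^ 2) (Icc (x k) (x (k + 1))) volume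
  ftc : ∀ k, ∀ t ∈ Ioo (x k) (x (k + 1)), f t = fr k + ∫ s in Ioc (x k) t, f' s
  fl_eq : ∀ k, fl (k + 1) = fr k + ∫ s in Ioc (x k) (x (k + 1)), f' s

/-- The jump `f(x_{k+1}+) − f(x_{k+1}−)` of a piecewise `H¹` function at the
interior node `x (k+1)` (the paper's node `x_{k+1}`). -/
def PW1.jump {x : ℕ → ℝ} (F : PW1 x) (k : ℕ) : ℝ := F.fr (k + 1) - F.fl (k + 1)

/-- Membership in the domain of the form `t_{X,β,q}`: `f ∈ L²(0,∞)`,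
`∫₀^∞ |f'|² < ∞`, `∫₀^∞ |q| |f|² < ∞` and `Σ_k |f(x_k+) − f(x_k−)|²/|β_k| < ∞`. -/
def MemDom (x : ℕ → ℝ) (q : ℝ → ℝ) (β : ℕ → ℝ) (F : PW1 x) : Prop :=
  IntegrableOn (fun t => F.f t ^ 2) (Ioi 0) volume ∧
  IntegrableOn (fun t => F.f' t ^ 2) (Ioi 0) volume ∧
  IntegrableOn (fun t => |q t| * F.f t ^ 2) (Ioi 0) volume ∧
  Summable (fun k => F.jump k ^ 2 / |β (k + 1)|)

/-- The value of the quadratic form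
`t_{X,β,q}[f] = ∫₀^∞ (|f'|² + q |f|²) dx + Σ_k |f(x_k+) − f(x_k−)|²/β_k`. -/
def formVal (x : ℕ → ℝ) (q : ℝ → ℝ) (β : ℕ → ℝ) (F : PW1 x) : ℝ :=
  (∫ t in Ioi (0 : ℝ), (F.f' t ^ 2 + q t * F.f t ^ 2)) +
    ∑' k, F.jump k ^ 2 / β (k + 1)

/-! The trace inequality: a function on an interval of length `d ≤ D` satisfies
`|f(endpoint)|² d ≤ 2 (1 + D²) ∫ (|f'|² + |f|²)` over that interval. Applied on the two
intervals adjacent to `x_k`, it bounds `|f(x_k+) − f(x_k−)|² / |β_k|` by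
`4 (1 + D²) |β_k|⁻¹ / min(d_k, d_{k+1})` times the `H¹`-energy of `f` on those two intervals.
Summing over `k ≥ N` counts each interval at most twice, so the tail is at most twice the
supremum of these weights over `k ≥ N`, which tends to `0` independently of `f`. -/

theorem sq_integral_le_measureReal_mul_integral_sq {α : Type*} [MeasurableSpace α]
    {μ : Measure α} [IsFiniteMeasure μ] {g : α → ℝ} (hg : Integrable g μ)
    (hg2 : Integrable (fun a => g a ^ 2) μ) :
    (∫ a, g a ∂μ) ^ 2 ≤ μ.real univ * ∫ a, g a ^ 2 ∂μ := by
  set m := μ.real univ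
  set I := ∫ a, g a ∂μ
  set J := ∫ a, g a ^ 2 ∂μ
  have hvar : ∫ a, (m * g a - I) ^ 2 ∂μ = m * (m * J - I ^ 2) := by
    have hexp : (fun a => (m * g a - I) ^ 2) =
        fun a => m ^ 2 * g a ^ 2 - 2 * m * I * g a + I ^ 2 := by
      funext a; ring
    have hint : Integrable (fun a => m ^ 2 * g a ^ 2 - 2 * m * I * g a) μ :=
      (hg2.const_mul _).sub (hg.const_mul _)
    rw [hexp, integral_add hint (integrable_const _),
      integral_sub (hg2.const_mul _) (hg.const_mul _), integral_const_mul, integral_const_mul,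
      integral_const, smul_eq_mul]
    ring
  have hnonneg : 0 ≤ m * (m * J - I ^ 2) := hvar ▸ integral_nonneg fun a => sq_nonneg _
  rcases measureReal_nonneg.eq_or_lt with hm | hm
  · have hμ : μ = 0 := Measure.measure_univ_eq_zero.1 ((measureReal_eq_zero_iff).1 hm.symm)
    simp [I, J, m, hμ]
  · nlinarith

theorem sq_mul_le_of_eq_add_intervalIntegral {g g' : ℝ → ℝ} {a b p v D : ℝ} (hab : a < b)
    (hD : b - a ≤ D) (hp : p ∈ Icc a b) (hg' : IntegrableOn g' (Icc a b))
    (hg'2 : IntegrableOn (fun t => g' t ^ 2) (Icc a b))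
    (hg2 : IntegrableOn (fun t => g t ^ 2) (Ioo a b))
    (hv : ∀ t ∈ Ioo a b, v = g t + ∫ s in t..p, g' s) :
    v ^ 2 * (b - a) ≤ 2 * (1 + D ^ 2) * ∫ t in Ioo a b, (g' t ^ 2 + g t ^ 2) := by
  set J := ∫ t in Ioo a b, g' t ^ 2
  have hJ : 0 ≤ J := setIntegral_nonneg measurableSet_Ioo fun _ _ => sq_nonneg _
  -- Cauchy–Schwarz on `[t, p]`, then average over `t ∈ (a, b)`.
  have hpt : ∀ t ∈ Ioo a b, v ^ 2 - 2 * (b - a) * J ≤ 2 * g t ^ 2 := by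
    intro t ht
    have hsub : uIoc t p ⊆ Icc a b :=
      uIoc_subset_uIcc.trans (uIcc_subset_Icc (Ioo_subset_Icc_self ht) hp)
    have hcs : (∫ s in t..p, g' s) ^ 2 ≤ (b - a) * J :=
      calc (∫ s in t..p, g' s) ^ 2 = (∫ s in uIoc t p, g' s) ^ 2 := by
            rw [← sq_abs, intervalIntegral.abs_integral_eq_abs_integral_uIoc, sq_abs]
        _ ≤ volume.real (uIoc t p) * ∫ s in uIoc t p, g' s ^ 2 := by
            have : IsFiniteMeasure (volume.restrict (uIoc t p)) := by
              rw [isFiniteMeasure_restrict, Real.volume_uIoc]; exact ENNReal.ofReal_ne_top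
            simpa using sq_integral_le_measureReal_mul_integral_sq (hg'.mono_set hsub)
              (hg'2.mono_set hsub)
        _ ≤ (b - a) * J := by
            gcongr
            · rw [measureReal_def, Real.volume_uIoc, ENNReal.toReal_ofReal (abs_nonneg _),
                abs_le]
              constructor <;> linarith [ht.1, ht.2, hp.1, hp.2]
            · exact (setIntegral_mono_set hg'2 (.of_forall fun _ => sq_nonneg _)
                (.of_forall hsub)).trans_eq integral_Icc_eq_integral_Ioo
    rw [hv t ht]
    nlinarith [sq_nonneg (g t - ∫ s in t..p, g' s)]
  have hint := setIntegral_ge_of_const_le_real measurableSet_Ioo (by simp) hpt (hg2.const_mul 2)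
  rw [Real.volume_real_Ioo_of_le hab.le, integral_const_mul] at hint
  have hd2 : (b - a) ^ 2 ≤ D ^ 2 := pow_le_pow_left₀ (by linarith) hD 2
  have hE : 0 ≤ ∫ t in Ioo a b, g t ^ 2 :=
    setIntegral_nonneg measurableSet_Ioo fun _ _ => sq_nonneg _
  rw [integral_add (hg'2.mono_set Ioo_subset_Icc_self) hg2]
  nlinarith [mul_le_mul_of_nonneg_right hd2 hJ]

theorem summable_of_le_mul_add_succ {a w I : ℕ → ℝ} {W : ℝ} (ha : ∀ k, 0 ≤ a k)
    (hI : ∀ k, 0 ≤ I k) (hIs : Summable I) (hw : ∀ k, w k ≤ W)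
    (h : ∀ k, a k ≤ w k * (I k + I (k + 1))) : Summable a :=
  .of_nonneg_of_le ha
    (fun k => (h k).trans (mul_le_mul_of_nonneg_right (hw k) (add_nonneg (hI k) (hI _))))
    ((hIs.add ((summable_nat_add_iff 1).2 hIs)).mul_left W)

theorem tsum_nat_add_le_of_le_mul_add_succ {a w I : ℕ → ℝ} {δ : ℝ} {N : ℕ}
    (has : Summable a) (hI : ∀ k, 0 ≤ I k) (hIs : Summable I) (hδ : 0 ≤ δ)
    (hw : ∀ k ≥ N, w k ≤ δ) (h : ∀ k, a k ≤ w k * (I k + I (k + 1))) :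
    ∑' k, a (N + k) ≤ 2 * δ * ∑' k, I k := by
  have hI₁ : Summable fun k => I (N + k) := hIs.comp_injective (add_right_injective N)
  have hI₂ : Summable fun k => I (N + k + 1) :=
    hIs.comp_injective ((add_left_injective 1).comp (add_right_injective N))
  calc ∑' k, a (N + k) ≤ ∑' k, δ * (I (N + k) + I (N + k + 1)) :=
        Summable.tsum_le_tsum (fun k => (h _).trans (mul_le_mul_of_nonneg_right
            (hw _ (Nat.le_add_right N k)) (add_nonneg (hI _) (hI _))))
          (has.comp_injective (add_right_injective N)) ((hI₁.add hI₂).mul_left δ)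
    _ = δ * (∑' k, I (N + k) + ∑' k, I (N + k + 1)) := by
        rw [tsum_mul_left, hI₁.tsum_add hI₂]
    _ ≤ δ * (∑' k, I k + ∑' k, I k) := by
        gcongr δ * (?_ + ?_)
        · exact tsum_comp_le_tsum_of_inj hIs hI (add_right_injective N)
        · exact tsum_comp_le_tsum_of_inj hIs hI
            ((add_left_injective 1).comp (add_right_injective N))
    _ = 2 * δ * ∑' k, I k := by ring

namespace PW1

variable {x : ℕ → ℝ} (F : PW1 x)

def energy (k : ℕ) : ℝ := ∫ t in Ioo (x k) (x (k + 1)), (F.f' t ^ 2 + F.f t ^ 2)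

theorem energy_nonneg (k : ℕ) : 0 ≤ F.energy k :=
  setIntegral_nonneg measurableSet_Ioo fun _ _ => by positivity

theorem integrableOn_f_sq (k : ℕ) :
    IntegrableOn (fun t => F.f t ^ 2) (Ioo (x k) (x (k + 1))) := by
  have hcont : ContinuousOn (fun t => (F.fr k + ∫ s in Ioc (x k) t, F.f' s) ^ 2)
      (Icc (x k) (x (k + 1))) :=
    (continuousOn_const.add (intervalIntegral.continuousOn_primitive (F.int_d k))).pow 2
  exact (hcont.integrableOn_Icc.mono_set Ioo_subset_Icc_self).congr_fun
    (fun t ht => by rw [F.ftc k t ht]) measurableSet_Ioo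

theorem fr_sq_mul_le {D : ℝ} (hmono : StrictMono x) {k : ℕ} (hD : x (k + 1) - x k ≤ D) :
    F.fr k ^ 2 * (x (k + 1) - x k) ≤ 2 * (1 + D ^ 2) * F.energy k := by
  refine sq_mul_le_of_eq_add_intervalIntegral (hmono k.lt_succ_self) hD
    (left_mem_Icc.2 (hmono k.lt_succ_self).le) (F.int_d k) (F.sq_d k) (F.integrableOn_f_sq k)
    fun t ht => ?_
  rw [F.ftc k t ht, ← intervalIntegral.integral_of_le ht.1.le, intervalIntegral.integral_symm]
  ring

theorem fl_sq_mul_le {D : ℝ} (hmono : StrictMono x) {k : ℕ} (hD : x (k + 1) - x k ≤ D) :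
    F.fl (k + 1) ^ 2 * (x (k + 1) - x k) ≤ 2 * (1 + D ^ 2) * F.energy k := by
  refine sq_mul_le_of_eq_add_intervalIntegral (hmono k.lt_succ_self) hD
    (right_mem_Icc.2 (hmono k.lt_succ_self).le) (F.int_d k) (F.sq_d k) (F.integrableOn_f_sq k)
    fun t ht => ?_
  have hint : IntervalIntegrable F.f' volume (x k) (x (k + 1)) :=
    (intervalIntegrable_iff_integrableOn_Icc_of_le (hmono k.lt_succ_self).le).2 (F.int_d k)
  rw [F.fl_eq k, F.ftc k t ht, ← intervalIntegral.integral_of_le ht.1.le,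
    ← intervalIntegral.integral_of_le (hmono k.lt_succ_self).le,
    ← intervalIntegral.integral_interval_sub_left hint
      ((intervalIntegrable_iff_integrableOn_Icc_of_le ht.1.le).2
        ((F.int_d k).mono_set (Icc_subset_Icc_right ht.2.le)))]
  ring

theorem sq_jump_mul_min_le {D : ℝ} (hmono : StrictMono x) (hD : ∀ k, x (k + 1) - x k ≤ D)
    (k : ℕ) :
    F.jump k ^ 2 * min (x (k + 1) - x k) (x (k + 2) - x (k + 1)) ≤
      4 * (1 + D ^ 2) * (F.energy k + F.energy (k + 1)) := by
  have hr : F.fr (k + 1) ^ 2 * (x (k + 2) - x (k + 1)) ≤ 2 * (1 + D ^ 2) * F.energy (k + 1) :=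
    F.fr_sq_mul_le hmono (hD (k + 1))
  have hl := F.fl_sq_mul_le hmono (hD k)
  have hm : 0 ≤ min (x (k + 1) - x k) (x (k + 2) - x (k + 1)) :=
    le_min (sub_nonneg.2 (hmono k.lt_succ_self).le) (sub_nonneg.2 (hmono (k + 1).lt_succ_self).le)
  calc F.jump k ^ 2 * min (x (k + 1) - x k) (x (k + 2) - x (k + 1))
      ≤ (2 * F.fr (k + 1) ^ 2 + 2 * F.fl (k + 1) ^ 2) *
          min (x (k + 1) - x k) (x (k + 2) - x (k + 1)) := by
        gcongr
        rw [jump]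
        nlinarith [sq_nonneg (F.fr (k + 1) + F.fl (k + 1))]
    _ ≤ 2 * (F.fr (k + 1) ^ 2 * (x (k + 2) - x (k + 1))) +
          2 * (F.fl (k + 1) ^ 2 * (x (k + 1) - x k)) := by
        rw [add_mul, mul_assoc, mul_assoc]
        exact add_le_add
          (mul_le_mul_of_nonneg_left (mul_le_mul_of_nonneg_left (min_le_right _ _) (sq_nonneg _))
            zero_le_two)
          (mul_le_mul_of_nonneg_left (mul_le_mul_of_nonneg_left (min_le_left _ _) (sq_nonneg _))
            zero_le_two)
    _ ≤ 4 * (1 + D ^ 2) * (F.energy k + F.energy (k + 1)) := by linarith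

end PW1

theorem stmt_16_general (x : ℕ → ℝ) (hmono : StrictMono x)
    (β : ℕ → ℝ)
    (D : ℝ) (hD : ∀ k, x (k + 1) - x k ≤ D)
    (hβ0 : Tendsto (fun k =>
      |β (k + 1)|⁻¹ / min (x (k + 1) - x k) (x (k + 2) - x (k + 1)))
      atTop (nhds 0)) :
    ∀ ε > 0, ∃ N : ℕ, ∀ F : PW1 x,
      Summable (fun k => ∫ t in Ioo (x k) (x (k + 1)), (F.f' t ^ 2 + F.f t ^ 2)) →
      (∑' k, ∫ t in Ioo (x k) (x (k + 1)), (F.f' t ^ 2 + F.f t ^ 2)) ≤ 1 →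
      (Summable (fun k => F.jump k ^ 2 / |β (k + 1)|) ∧
        (∑' k, F.jump (N + k) ^ 2 / |β (N + k + 1)|) ≤ ε) := by
  set w : ℕ → ℝ := fun k =>
    4 * (1 + D ^ 2) * (|β (k + 1)|⁻¹ / min (x (k + 1) - x k) (x (k + 2) - x (k + 1)))
  have hw : Tendsto w atTop (nhds 0) := by simpa using hβ0.const_mul (4 * (1 + D ^ 2))
  obtain ⟨W, hW⟩ := hw.bddAbove_range
  intro ε hε
  obtain ⟨N, hN⟩ := eventually_atTop.1 (hw.eventually (ge_mem_nhds (half_pos hε)))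
  refine ⟨N, fun F hsum hle => ?_⟩
  have hjump (k : ℕ) :
      F.jump k ^ 2 / |β (k + 1)| ≤ w k * (F.energy k + F.energy (k + 1)) := by
    have hm : 0 < min (x (k + 1) - x k) (x (k + 2) - x (k + 1)) :=
      lt_min (sub_pos.2 (hmono k.lt_succ_self)) (sub_pos.2 (hmono (k + 1).lt_succ_self))
    rw [div_eq_inv_mul]
    calc |β (k + 1)|⁻¹ * F.jump k ^ 2
        ≤ |β (k + 1)|⁻¹ * (4 * (1 + D ^ 2) * (F.energy k + F.energy (k + 1)) /
            min (x (k + 1) - x k) (x (k + 2) - x (k + 1))) := by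
          gcongr
          exact (le_div_iff₀ hm).2 (F.sq_jump_mul_min_le hmono hD k)
      _ = w k * (F.energy k + F.energy (k + 1)) := by ring
  have hsumm := summable_of_le_mul_add_succ (fun k => by positivity) F.energy_nonneg hsum
    (fun k => hW ⟨k, rfl⟩) hjump
  refine ⟨hsumm, ?_⟩
  calc ∑' k, F.jump (N + k) ^ 2 / |β (N + k + 1)|
      ≤ 2 * (ε / 2) * ∑' k, F.energy k :=
        tsum_nat_add_le_of_le_mul_add_succ hsumm F.energy_nonneg hsum (half_pos hε).le hN hjump
    _ ≤ ε := by nlinarith [show ∑' k, F.energy k ≤ 1 from hle]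

/-- **Core of Lemma 4.1** (compactness of the jump map): if `d^* < ∞` and
`|β_k|⁻¹ / min(d_k, d_{k+1}) → 0`, then the tails of the jump sums are
uniformly small over the unit ball of `W^{1,2}(ℝ₊∖X)`. -/
theorem stmt_16 (x : ℕ → ℝ) (hx0 : x 0 = 0) (hmono : StrictMono x)
    (hxtop : Tendsto x atTop atTop)
    (β : ℕ → ℝ) (hβ : ∀ k, β (k + 1) ≠ 0)
    (D : ℝ) (hD : ∀ k, x (k + 1) - x k ≤ D)
    (hβ0 : Tendsto (fun k =>
      |β (k + 1)|⁻¹ / min (x (k + 1) - x k) (x (k + 2) - x (k + 1)))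
      atTop (nhds 0)) :
    ∀ ε > 0, ∃ N : ℕ, ∀ F : PW1 x,
      Summable (fun k => ∫ t in Ioo (x k) (x (k + 1)), (F.f' t ^ 2 + F.f t ^ 2)) →
      (∑' k, ∫ t in Ioo (x k) (x (k + 1)), (F.f' t ^ 2 + F.f t ^ 2)) ≤ 1 →
      (Summable (fun k => F.jump k ^ 2 / |β (k + 1)|) ∧
        (∑' k, F.jump (N + k) ^ 2 / |β (N + k + 1)|) ≤ ε) :=
  stmt_16_general x hmono β D hD hβ0

end
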